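/- Let n ≥ 2 and k, ν ≥ 0 be integers and let ρ be a real number. Then the Lebesgue integral ∫₀^∞ r^{n+ρ−1} · p_{k,ν}^n(r) dr is finite if and only if ρ > max{−n, ν − k}. -/

import Mathlib

noncomputable section

open Set MeasureTheory Real Filter

namespace Stmt8Aux

/-- Basic integrability: `s^q e^{-(s+1)r}` on `(0,∞)` for `q > -1`, `r > 0`. -/
lemma integrableOn_rpow_exp {q r : ℝ} (hq : -1 < q) (hr : 0 < r) :
    IntegrableOn (fun s => s ^ q * Real.exp (-(s + 1) * r)) (Ioi (0:ℝ)) := by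
  have h := integrableOn_rpow_mul_exp_neg_mul_rpow hq one_pos hr
  have he : (fun s : ℝ => s ^ q * Real.exp (-(s + 1) * r)) =
      fun s => Real.exp (-r) * (s ^ q * Real.exp (-r * s ^ (1:ℝ))) := by
    ext s
    rw [Real.rpow_one, ← mul_assoc, mul_comm (Real.exp (-r)), mul_assoc, ← Real.exp_add]
    ring_nf
  rw [he]
  exact h.const_mul _

/-- `(1+s)^c ≤ 2^|c| (1 + s^|c|)` for `s > 0`. -/
lemma one_add_rpow_le {s : ℝ} (hs : 0 < s) (c : ℝ) :
    (1 + s) ^ c ≤ 2 ^ |c| * (1 + s ^ |c|) := by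
  have h1 : (1 + s) ^ c ≤ (1 + s) ^ |c| :=
    Real.rpow_le_rpow_of_exponent_le (by linarith) (le_abs_self c)
  have h2 : (1 + s) ^ |c| ≤ (2 * max 1 s) ^ |c| := by
    apply Real.rpow_le_rpow (by linarith) _ (abs_nonneg c)
    rcases le_total s 1 with h | h
    · have : max 1 s = 1 := max_eq_left h
      rw [this]; linarith
    · have : max 1 s = s := max_eq_right h
      rw [this]; linarith
  have h3 : (2 * max 1 s) ^ |c| = 2 ^ |c| * (max 1 s) ^ |c| :=
    Real.mul_rpow (by norm_num) (le_max_of_le_left zero_le_one)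
  have h4 : (max 1 s) ^ |c| ≤ 1 + s ^ |c| := by
    rcases le_total s 1 with h | h
    · rw [max_eq_left h, Real.one_rpow]
      have := Real.rpow_nonneg hs.le |c|
      linarith
    · rw [max_eq_right h]
      have : (0:ℝ) ≤ 1 := zero_le_one
      linarith
  calc (1 + s) ^ c ≤ (2 * max 1 s) ^ |c| := h1.trans h2
    _ = 2 ^ |c| * (max 1 s) ^ |c| := h3
    _ ≤ 2 ^ |c| * (1 + s ^ |c|) := by
        apply mul_le_mul_of_nonneg_left h4 (Real.rpow_nonneg (by norm_num) _)

/-- Integrability of the full kernel in `s`, for fixed `r > 0` and `q ≥ 0`. -/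
lemma integrableOn_kernel {q : ℝ} (c : ℝ) {r : ℝ} (hq : 0 ≤ q) (hr : 0 < r) :
    IntegrableOn (fun s => s ^ q * (1 + s) ^ c * Real.exp (-(s + 1) * r)) (Ioi (0:ℝ)) := by
  have h1 : IntegrableOn (fun s => s ^ q * Real.exp (-(s + 1) * r)) (Ioi (0:ℝ)) :=
    integrableOn_rpow_exp (by linarith) hr
  have h2 : IntegrableOn (fun s => s ^ (q + |c|) * Real.exp (-(s + 1) * r)) (Ioi (0:ℝ)) :=
    integrableOn_rpow_exp (by have := abs_nonneg c; linarith) hr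
  have hg : IntegrableOn (fun s => 2 ^ |c| *
      ((s ^ q * Real.exp (-(s + 1) * r)) + (s ^ (q + |c|) * Real.exp (-(s + 1) * r))))
      (Ioi (0:ℝ)) := (h1.add h2).const_mul _
  apply Integrable.mono' hg
  · apply Measurable.aestronglyMeasurable; fun_prop
  · filter_upwards [ae_restrict_mem measurableSet_Ioi] with s hs
    have hs0 : (0:ℝ) < s := hs
    have hE : (0:ℝ) < Real.exp (-(s + 1) * r) := Real.exp_pos _
    have hsq : (0:ℝ) ≤ s ^ q := Real.rpow_nonneg hs0.le _
    have h1s : (0:ℝ) ≤ (1 + s) ^ c := Real.rpow_nonneg (by linarith) _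
    rw [Real.norm_eq_abs, abs_of_nonneg (by positivity)]
    have key : s ^ q * (1 + s) ^ c ≤ 2 ^ |c| * (s ^ q + s ^ (q + |c|)) := by
      calc s ^ q * (1 + s) ^ c ≤ s ^ q * (2 ^ |c| * (1 + s ^ |c|)) :=
            mul_le_mul_of_nonneg_left (one_add_rpow_le hs0 c) hsq
        _ = 2 ^ |c| * (s ^ q + s ^ q * s ^ |c|) := by ring
        _ = 2 ^ |c| * (s ^ q + s ^ (q + |c|)) := by rw [← Real.rpow_add hs0]
    calc s ^ q * (1 + s) ^ c * Real.exp (-(s + 1) * r)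
        ≤ 2 ^ |c| * (s ^ q + s ^ (q + |c|)) * Real.exp (-(s + 1) * r) :=
          mul_le_mul_of_nonneg_right key hE.le
      _ = 2 ^ |c| * ((s ^ q * Real.exp (-(s + 1) * r)) +
            (s ^ (q + |c|) * Real.exp (-(s + 1) * r))) := by ring

/-- Value of the `r`-integral when convergent. -/
lemma lintegral_rpow_exp_eq {a b : ℝ} (ha : -1 < a) (hb : 0 < b) :
    ∫⁻ r in Ioi (0:ℝ), ENNReal.ofReal (r ^ a * Real.exp (-(b * r))) =
      ENNReal.ofReal (b ^ (-(a + 1)) * Real.Gamma (a + 1)) := by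
  have hint : IntegrableOn (fun r => r ^ a * Real.exp (-(b * r))) (Ioi (0:ℝ)) := by
    have := integrableOn_rpow_mul_exp_neg_mul_rpow ha one_pos hb
    simpa [Real.rpow_one, neg_mul] using this
  rw [← ofReal_integral_eq_lintegral_ofReal hint]
  · congr 1
    have := integral_rpow_mul_exp_neg_mul_rpow one_pos ha hb
    simp only [Real.rpow_one, div_one, one_div, inv_one, mul_one, neg_mul] at this ⊢
    rw [this]
  · filter_upwards [ae_restrict_mem measurableSet_Ioi] with r hr
    have : (0:ℝ) < r := hr
    positivity

/-- Divergence of the `r`-integral when `a ≤ -1`. -/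
lemma lintegral_rpow_exp_top {a b : ℝ} (ha : a ≤ -1) (hb : 0 < b) :
    ∫⁻ r in Ioi (0:ℝ), ENNReal.ofReal (r ^ a * Real.exp (-(b * r))) = ⊤ := by
  have key : ∫⁻ r in Ioo (0:ℝ) 1, ENNReal.ofReal (r ^ a) = ⊤ := by
    by_contra h
    have hm : AEStronglyMeasurable (fun r : ℝ => r ^ a) (volume.restrict (Ioo 0 1)) := by
      apply Measurable.aestronglyMeasurable; fun_prop
    have hnn : 0 ≤ᵐ[volume.restrict (Ioo (0:ℝ) 1)] fun r : ℝ => r ^ a := by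
      filter_upwards [ae_restrict_mem measurableSet_Ioo] with r hr
      exact Real.rpow_nonneg hr.1.le _
    have h2 : IntegrableOn (fun r : ℝ => r ^ a) (Ioo 0 1) :=
      (lintegral_ofReal_ne_top_iff_integrable hm hnn).mp h
    rw [intervalIntegral.integrableOn_Ioo_rpow_iff one_pos] at h2
    linarith
  rw [eq_top_iff]
  calc (⊤:ENNReal) = ENNReal.ofReal (Real.exp (-b)) * ∫⁻ r in Ioo (0:ℝ) 1, ENNReal.ofReal (r ^ a) := by
        rw [key, ENNReal.mul_top (by simp [Real.exp_pos])]
    _ = ∫⁻ r in Ioo (0:ℝ) 1, ENNReal.ofReal (Real.exp (-b)) * ENNReal.ofReal (r ^ a) :=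
        (lintegral_const_mul' _ _ ENNReal.ofReal_ne_top).symm
    _ ≤ ∫⁻ r in Ioo (0:ℝ) 1, ENNReal.ofReal (r ^ a * Real.exp (-(b * r))) := by
        apply lintegral_mono_ae
        filter_upwards [ae_restrict_mem measurableSet_Ioo] with r hr
        rw [← ENNReal.ofReal_mul (Real.exp_pos _).le]
        apply ENNReal.ofReal_le_ofReal
        rw [mul_comm]
        apply mul_le_mul_of_nonneg_left _ (Real.rpow_nonneg hr.1.le _)
        apply Real.exp_le_exp.mpr
        nlinarith [hr.1, hr.2]
    _ ≤ ∫⁻ r in Ioi (0:ℝ), ENNReal.ofReal (r ^ a * Real.exp (-(b * r))) :=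
        lintegral_mono_set Ioo_subset_Ioi_self

/-- Finiteness of the outer `s`-integral when `q + d < -1`. -/
lemma lintegral_pow_one_add_lt_top {q d : ℝ} (hq : 0 ≤ q) (h : q + d < -1) :
    ∫⁻ s in Ioi (0:ℝ), ENNReal.ofReal (s ^ q * (1 + s) ^ d) < ⊤ := by
  have hd : d < 0 := by linarith
  have hm : AEStronglyMeasurable (fun s : ℝ => s ^ q * (1 + s) ^ d)
      (volume.restrict (Ioi 0)) := by
    apply Measurable.aestronglyMeasurable; fun_prop
  have hnn : 0 ≤ᵐ[volume.restrict (Ioi (0:ℝ))] fun s : ℝ => s ^ q * (1 + s) ^ d := by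
    filter_upwards [ae_restrict_mem measurableSet_Ioi] with s hs
    have : (0:ℝ) < s := hs
    positivity
  rw [lt_top_iff_ne_top, lintegral_ofReal_ne_top_iff_integrable hm hnn]
  have hIoc : IntegrableOn (fun s : ℝ => s ^ q * (1 + s) ^ d) (Ioc 0 1) := by
    apply Measure.integrableOn_of_bounded (M := 1) (by simp)
    · apply Measurable.aestronglyMeasurable; fun_prop
    · filter_upwards [ae_restrict_mem measurableSet_Ioc] with s hs
      have hs0 : (0:ℝ) < s := hs.1
      rw [Real.norm_eq_abs, abs_of_nonneg (by positivity)]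
      have h1 : s ^ q ≤ 1 := Real.rpow_le_one hs0.le hs.2 hq
      have h2 : (1 + s) ^ d ≤ 1 :=
        Real.rpow_le_one_of_one_le_of_nonpos (by linarith) hd.le
      have := Real.rpow_nonneg (show (0:ℝ) ≤ 1 + s by linarith) d
      nlinarith [Real.rpow_nonneg hs0.le q]
  have hIoi : IntegrableOn (fun s : ℝ => s ^ q * (1 + s) ^ d) (Ioi 1) := by
    have hbig : IntegrableOn (fun s : ℝ => s ^ (q + d)) (Ioi 1) :=
      (integrableOn_Ioi_rpow_iff one_pos).mpr h
    apply Integrable.mono' hbig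
    · apply Measurable.aestronglyMeasurable; fun_prop
    · filter_upwards [ae_restrict_mem measurableSet_Ioi] with s hs
      have hs1 : (1:ℝ) < s := hs
      have hs0 : (0:ℝ) < s := by linarith
      rw [Real.norm_eq_abs, abs_of_nonneg (by positivity)]
      calc s ^ q * (1 + s) ^ d ≤ s ^ q * s ^ d := by
            apply mul_le_mul_of_nonneg_left _ (Real.rpow_nonneg hs0.le _)
            exact Real.rpow_le_rpow_of_nonpos hs0 (by linarith) hd.le
        _ = s ^ (q + d) := (Real.rpow_add hs0 _ _).symm
  have : IntegrableOn (fun s : ℝ => s ^ q * (1 + s) ^ d) (Ioc 0 1 ∪ Ioi 1) :=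
    hIoc.union hIoi
  apply this.mono_set
  intro x hx
  rcases le_or_gt x 1 with h1 | h1
  · exact Or.inl ⟨hx, h1⟩
  · exact Or.inr h1

/-- Divergence of the outer `s`-integral when `q + d ≥ -1`. -/
lemma lintegral_pow_one_add_top {q d : ℝ} (hq : 0 ≤ q) (h : -1 ≤ q + d) :
    ∫⁻ s in Ioi (0:ℝ), ENNReal.ofReal (s ^ q * (1 + s) ^ d) = ⊤ := by
  set m : ℝ := min 1 (2 ^ d) with hm
  have hmpos : 0 < m := lt_min one_pos (Real.rpow_pos_of_pos two_pos d)
  have key : ∫⁻ s in Ioi (1:ℝ), ENNReal.ofReal (s ^ (q + d)) = ⊤ := by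
    by_contra hcon
    have hmeas : AEStronglyMeasurable (fun s : ℝ => s ^ (q + d))
        (volume.restrict (Ioi 1)) := by
      apply Measurable.aestronglyMeasurable; fun_prop
    have hnn : 0 ≤ᵐ[volume.restrict (Ioi (1:ℝ))] fun s : ℝ => s ^ (q + d) := by
      filter_upwards [ae_restrict_mem measurableSet_Ioi] with s hs
      exact Real.rpow_nonneg (by linarith [mem_Ioi.mp hs]) _
    have h2 : IntegrableOn (fun s : ℝ => s ^ (q + d)) (Ioi 1) :=
      (lintegral_ofReal_ne_top_iff_integrable hmeas hnn).mp hcon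
    rw [integrableOn_Ioi_rpow_iff one_pos] at h2
    linarith
  rw [eq_top_iff]
  calc (⊤:ENNReal) = ENNReal.ofReal m * ∫⁻ s in Ioi (1:ℝ), ENNReal.ofReal (s ^ (q + d)) := by
        rw [key, ENNReal.mul_top (by simp [hmpos])]
    _ = ∫⁻ s in Ioi (1:ℝ), ENNReal.ofReal m * ENNReal.ofReal (s ^ (q + d)) :=
        (lintegral_const_mul' _ _ ENNReal.ofReal_ne_top).symm
    _ ≤ ∫⁻ s in Ioi (1:ℝ), ENNReal.ofReal (s ^ q * (1 + s) ^ d) := by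
        apply lintegral_mono_ae
        filter_upwards [ae_restrict_mem measurableSet_Ioi] with s hs
        have hs1 : (1:ℝ) < s := hs
        have hs0 : (0:ℝ) < s := by linarith
        rw [← ENNReal.ofReal_mul hmpos.le]
        apply ENNReal.ofReal_le_ofReal
        have hlow : m * s ^ d ≤ (1 + s) ^ d := by
          rcases le_or_gt 0 d with hd | hd
          · calc m * s ^ d ≤ 1 * s ^ d := by
                  apply mul_le_mul_of_nonneg_right (min_le_left _ _)
                    (Real.rpow_nonneg hs0.le _)
              _ = s ^ d := one_mul _
              _ ≤ (1 + s) ^ d := Real.rpow_le_rpow hs0.le (by linarith) hd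
          · calc m * s ^ d ≤ 2 ^ d * s ^ d := by
                  apply mul_le_mul_of_nonneg_right (min_le_right _ _)
                    (Real.rpow_nonneg hs0.le _)
              _ = (2 * s) ^ d := (Real.mul_rpow (by norm_num) hs0.le).symm
              _ ≤ (1 + s) ^ d :=
                  Real.rpow_le_rpow_of_nonpos (by linarith) (by linarith) hd.le
        calc m * s ^ (q + d) = m * (s ^ q * s ^ d) := by rw [Real.rpow_add hs0]
          _ = s ^ q * (m * s ^ d) := by ring
          _ ≤ s ^ q * (1 + s) ^ d :=
              mul_le_mul_of_nonneg_left hlow (Real.rpow_nonneg hs0.le _)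
    _ ≤ ∫⁻ s in Ioi (0:ℝ), ENNReal.ofReal (s ^ q * (1 + s) ^ d) :=
        lintegral_mono_set (Ioi_subset_Ioi zero_le_one)

end Stmt8Aux

open Set

/-- The kernel-bound function `p_{k,ν}^n(r) = ∫₀^∞ s^{n−2} (1+s)^{ν+1−k} e^{−(s+1)r} ds`. -/
def pFun (n k ν : ℕ) (r : ℝ) : ℝ :=
  ∫ s in Ioi (0 : ℝ),
    s ^ ((n : ℝ) - 2) * (1 + s) ^ ((ν : ℝ) + 1 - (k : ℝ)) * Real.exp (-(s + 1) * r)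

/-- The Lebesgue integral `∫₀^∞ r^{n+ρ−1} p_{k,ν}^n(r) dr` is finite if and
only if `ρ > max{−n, ν−k}`. -/
theorem stmt8 (n k ν : ℕ) (hn : 2 ≤ n) (ρ : ℝ) :
    (∫⁻ r in Ioi (0 : ℝ), ENNReal.ofReal (r ^ ((n : ℝ) + ρ - 1) * pFun n k ν r)) < ⊤ ↔
      max (-(n : ℝ)) ((ν : ℝ) - (k : ℝ)) < ρ := by
  classical
  set a : ℝ := (n : ℝ) + ρ - 1 with ha
  set q : ℝ := (n : ℝ) - 2 with hqdef
  set c : ℝ := (ν : ℝ) + 1 - (k : ℝ) with hcdef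
  have hq : 0 ≤ q := by
    have : (2:ℝ) ≤ n := by exact_mod_cast hn
    simp [hqdef]; linarith
  -- the double-integrand, as a product of two `ofReal`s
  set F : ℝ → ℝ → ENNReal := fun r s =>
    ENNReal.ofReal (s ^ q * (1 + s) ^ c) *
      ENNReal.ofReal (r ^ a * Real.exp (-((s + 1) * r))) with hF
  have hFmeas : AEMeasurable (Function.uncurry F)
      ((volume.restrict (Ioi (0:ℝ))).prod (volume.restrict (Ioi (0:ℝ)))) := by
    apply Measurable.aemeasurable
    apply Measurable.mul (f := fun p : ℝ × ℝ => ENNReal.ofReal (p.2 ^ q * (1 + p.2) ^ c))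
      (g := fun p : ℝ × ℝ => ENNReal.ofReal (p.1 ^ a * Real.exp (-((p.2 + 1) * p.1))))
    · apply ENNReal.measurable_ofReal.comp; fun_prop
    · apply ENNReal.measurable_ofReal.comp; fun_prop
  -- Step 1: rewrite LHS as iterated lintegral
  have step1 : (∫⁻ r in Ioi (0 : ℝ), ENNReal.ofReal (r ^ a * pFun n k ν r)) =
      ∫⁻ r in Ioi (0:ℝ), ∫⁻ s in Ioi (0:ℝ), F r s := by
    apply setLIntegral_congr_fun_ae measurableSet_Ioi
    apply Filter.Eventually.of_forall
    intro r hr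
    have hr0 : (0:ℝ) < r := hr
    have hint := Stmt8Aux.integrableOn_kernel c hq hr0
    have hnn : 0 ≤ᵐ[volume.restrict (Ioi (0:ℝ))]
        fun s : ℝ => s ^ q * (1 + s) ^ c * Real.exp (-(s + 1) * r) := by
      filter_upwards [ae_restrict_mem measurableSet_Ioi] with s hs
      have : (0:ℝ) < s := hs
      positivity
    have hpf : ENNReal.ofReal (pFun n k ν r) =
        ∫⁻ s in Ioi (0:ℝ), ENNReal.ofReal (s ^ q * (1 + s) ^ c * Real.exp (-(s + 1) * r)) := by
      exact ofReal_integral_eq_lintegral_ofReal hint hnn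
    rw [ENNReal.ofReal_mul (Real.rpow_nonneg hr0.le a), hpf,
      ← lintegral_const_mul' _ _ ENNReal.ofReal_ne_top]
    apply setLIntegral_congr_fun_ae measurableSet_Ioi
    apply Filter.Eventually.of_forall
    intro s hs
    have hs0 : (0:ℝ) < s := hs
    show ENNReal.ofReal (r ^ a) *
        ENNReal.ofReal (s ^ q * (1 + s) ^ c * Real.exp (-(s + 1) * r)) =
      ENNReal.ofReal (s ^ q * (1 + s) ^ c) *
        ENNReal.ofReal (r ^ a * Real.exp (-((s + 1) * r)))
    rw [show -((s + 1) * r) = -(s + 1) * r from (neg_mul _ _).symm,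
      ← ENNReal.ofReal_mul (Real.rpow_nonneg hr0.le a),
      ← ENNReal.ofReal_mul (show (0:ℝ) ≤ s ^ q * (1 + s) ^ c by positivity)]
    congr 1
    ring
  -- Step 2: swap
  have step2 : (∫⁻ r in Ioi (0:ℝ), ∫⁻ s in Ioi (0:ℝ), F r s) =
      ∫⁻ s in Ioi (0:ℝ), ∫⁻ r in Ioi (0:ℝ), F r s :=
    lintegral_lintegral_swap hFmeas
  -- Step 3: compute inner integral
  have inner_eq : ∀ s : ℝ, 0 < s → (∫⁻ r in Ioi (0:ℝ), F r s) =
      ENNReal.ofReal (s ^ q * (1 + s) ^ c) *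
        ∫⁻ r in Ioi (0:ℝ), ENNReal.ofReal (r ^ a * Real.exp (-((s + 1) * r))) := by
    intro s hs
    rw [hF, lintegral_const_mul' _ _ ENNReal.ofReal_ne_top]
  rw [step1, step2]
  rcases le_or_gt ρ (-(n:ℝ)) with hcase | hcase
  · -- divergent case: `a ≤ -1`
    have ha1 : a ≤ -1 := by simp only [ha]; linarith
    have htop : (∫⁻ s in Ioi (0:ℝ), ∫⁻ r in Ioi (0:ℝ), F r s) = ⊤ := by
      have : ∀ s ∈ Ioi (0:ℝ), (∫⁻ r in Ioi (0:ℝ), F r s) = ⊤ := by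
        intro s hs
        have hs0 : (0:ℝ) < s := hs
        rw [inner_eq s hs0, Stmt8Aux.lintegral_rpow_exp_top ha1 (by linarith)]
        rw [ENNReal.mul_top]
        simp only [ne_eq, ENNReal.ofReal_eq_zero, not_le]
        positivity
      rw [setLIntegral_congr_fun_ae measurableSet_Ioi
        (Filter.Eventually.of_forall this), setLIntegral_const]
      simp [Real.volume_Ioi]
    rw [htop]
    simp only [lt_self_iff_false, false_iff, not_lt, le_max_iff]
    left
    exact hcase
  · -- `a > -1`
    have ha1 : -1 < a := by simp only [ha]; linarith
    have hGpos : 0 < Real.Gamma (a + 1) := Real.Gamma_pos_of_pos (by linarith)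
    set d : ℝ := c - (a + 1) with hd
    have heq : (∫⁻ s in Ioi (0:ℝ), ∫⁻ r in Ioi (0:ℝ), F r s) =
        ENNReal.ofReal (Real.Gamma (a + 1)) *
          ∫⁻ s in Ioi (0:ℝ), ENNReal.ofReal (s ^ q * (1 + s) ^ d) := by
      rw [← lintegral_const_mul' _ _ ENNReal.ofReal_ne_top]
      apply setLIntegral_congr_fun_ae measurableSet_Ioi
      apply Filter.Eventually.of_forall
      intro s hs
      have hs0 : (0:ℝ) < s := hs
      rw [inner_eq s hs0, Stmt8Aux.lintegral_rpow_exp_eq ha1 (by linarith)]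
      rw [← ENNReal.ofReal_mul (by positivity), ← ENNReal.ofReal_mul (by positivity)]
      congr 1
      have h1s : (0:ℝ) < 1 + s := by linarith
      have hpow : (s + 1) ^ (-(a + 1)) = (1 + s) ^ (-(a + 1)) := by rw [add_comm]
      rw [hpow]
      have hrp : (1 + s) ^ c * (1 + s) ^ (-(a + 1)) = (1 + s) ^ d := by
        rw [← Real.rpow_add h1s, hd]
        ring_nf
      calc s ^ q * (1 + s) ^ c * ((1 + s) ^ (-(a + 1)) * Real.Gamma (a + 1))
          = s ^ q * ((1 + s) ^ c * (1 + s) ^ (-(a+1))) * Real.Gamma (a+1) := by ring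
        _ = Real.Gamma (a + 1) * (s ^ q * (1 + s) ^ d) := by rw [hrp]; ring
    rw [heq]
    have hGne : ENNReal.ofReal (Real.Gamma (a + 1)) ≠ 0 := by
      simp only [ne_eq, ENNReal.ofReal_eq_zero, not_le]; exact hGpos
    have hqd : q + d = (ν : ℝ) - (k : ℝ) - ρ - 1 := by
      simp only [hqdef, hd, hcdef, ha]; ring
    constructor
    · intro hfin
      rw [max_lt_iff]
      refine ⟨hcase, ?_⟩
      by_contra hle
      push_neg at hle
      have : -1 ≤ q + d := by rw [hqd]; linarith
      rw [Stmt8Aux.lintegral_pow_one_add_top hq this, ENNReal.mul_top hGne] at hfin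
      exact absurd hfin (by simp)
    · intro hmax
      have hρ : (ν : ℝ) - (k : ℝ) < ρ := (max_lt_iff.mp hmax).2
      have : q + d < -1 := by rw [hqd]; linarith
      have hfin := Stmt8Aux.lintegral_pow_one_add_lt_top hq this
      exact ENNReal.mul_lt_top ENNReal.ofReal_lt_top hfin

end
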